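/- arXiv:2312.16452 — 5 statements merged into one kernel-verified Lean document; each statement's English description precedes it below -/
import Mathlib

section
/- Let Z(y) = (1−y²)/(1+y²) and V(y) = (y⁴ − 6y² + 1)/(1+y²)². Define, for functions on (0,∞), (Au)(y) = −u'(y) + Z(y)u(y)/y and (A*v)(y) = v'(y) + (1+Z(y))v(y)/y. Then for every twice differentiable u : (0,∞) → ℝ and every y > 0, (A*(Au))(y) = −u''(y) − (1/y)u'(y) + V(y)u(y)/y². In particular the linearized operator H factorizes as H = A*A. (Key identity: y·Z'(y) + Z(y)² = V(y).) -/
open Real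

/-- `Z(y) = (1-y²)/(1+y²)`. -/
noncomputable def Zfun (y : ℝ) : ℝ := (1 - y ^ 2) / (1 + y ^ 2)

/-- The potential `V(y) = (y⁴ - 6y² + 1)/(1+y²)²`. -/
noncomputable def Vfun (y : ℝ) : ℝ := (y ^ 4 - 6 * y ^ 2 + 1) / (1 + y ^ 2) ^ 2

/-- `(Au)(y) = -u'(y) + Z(y)u(y)/y`. -/
noncomputable def Aop (u : ℝ → ℝ) : ℝ → ℝ := fun y => -deriv u y + Zfun y * u y / y

/-- `(A*v)(y) = v'(y) + (1+Z(y))v(y)/y`. -/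
noncomputable def Astarop (v : ℝ → ℝ) : ℝ → ℝ := fun y => deriv v y + (1 + Zfun y) * v y / y

/-!
For any differentiable `Z`, composing `A = -∂ + Z/y` with `A* = ∂ + (1+Z)/y` gives
`A*A = -∂² - (1/y)∂ + (y Z' + Z²)/y²`: the first-order terms `± Z u'/y` cancel and the
zeroth-order terms collect into the Riccati expression `y Z' + Z²`. For `Z = (1-y²)/(1+y²)`
that expression is exactly the potential `V`.
-/

theorem factorization_apply_of_hasDerivAt {Z u : ℝ → ℝ} {y Z' : ℝ} (hy : y ≠ 0)
    (hZ : HasDerivAt Z Z' y) (hu : DifferentiableAt ℝ u y)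
    (hu' : DifferentiableAt ℝ (deriv u) y) :
    deriv (fun z => -deriv u z + Z z * u z / z) y
        + (1 + Z y) * (-deriv u y + Z y * u y / y) / y
      = -deriv (deriv u) y - (1 / y) * deriv u y + (y * Z' + Z y ^ 2) * u y / y ^ 2 := by
  have hA : HasDerivAt (fun z => -deriv u z + Z z * u z / z)
      (-deriv (deriv u) y + ((Z' * u y + Z y * deriv u y) * y - Z y * u y * 1) / y ^ 2) y :=
    hu'.hasDerivAt.neg.add ((hZ.mul hu.hasDerivAt).div (hasDerivAt_id y) hy)
  rw [hA.deriv]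
  field_simp
  ring

theorem hasDerivAt_Zfun (y : ℝ) : HasDerivAt Zfun (-4 * y / (1 + y ^ 2) ^ 2) y := by
  have hnum : HasDerivAt (fun y : ℝ => 1 - y ^ 2) (-(2 * y)) y := by
    simpa using (hasDerivAt_pow 2 y).const_sub 1
  have hden : HasDerivAt (fun y : ℝ => 1 + y ^ 2) (2 * y) y := by
    simpa using (hasDerivAt_pow 2 y).const_add 1
  exact (hnum.div hden (by positivity)).congr_deriv (by ring)

theorem mul_deriv_Zfun_add_Zfun_sq (y : ℝ) : y * deriv Zfun y + Zfun y ^ 2 = Vfun y := by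
  rw [(hasDerivAt_Zfun y).deriv, Zfun, Vfun]
  field_simp
  ring

/-- Factorization `H = A*A` of the linearized Hamiltonian, together with the key
identity `y Z' + Z² = V`. -/
theorem factorization_of_H (u : ℝ → ℝ)
    (hu : ∀ y ∈ Set.Ioi (0:ℝ), DifferentiableAt ℝ u y)
    (hu' : ∀ y ∈ Set.Ioi (0:ℝ), DifferentiableAt ℝ (deriv u) y) :
    (∀ y > (0:ℝ),
      Astarop (Aop u) y
        = -(deriv (deriv u) y) - (1 / y) * deriv u y + Vfun y * u y / y ^ 2) ∧
    (∀ y : ℝ, y * deriv Zfun y + Zfun y ^ 2 = Vfun y) := by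
  refine ⟨fun y hy => ?_, mul_deriv_Zfun_add_Zfun_sq⟩
  have h := factorization_apply_of_hasDerivAt hy.ne'
    (hasDerivAt_Zfun y).differentiableAt.hasDerivAt (hu y hy) (hu' y hy)
  rwa [mul_deriv_Zfun_add_Zfun_sq] at h
end

section
/- Define Γ(y) = (2y/(1+y²)) · ( y²/8 + (log y)/2 − 1/(8y²) ) for y > 0, and let ΛQ(y) = 2y/(1+y²). Then: (i) Γ(y) = ΛQ(y) · ∫₁^y dx/(x·ΛQ(x)²) for all y > 0; (ii) HΓ = 0 on (0,∞), i.e. −Γ''(y) − (1/y)Γ'(y) + V(y)Γ(y)/y² = 0 for all y > 0; (iii) Γ(y) = O(1/y) as y → 0⁺ and Γ(y) − y/4 = O((log y)/y) as y → ∞; (iv) the Wronskian identity ΛQ(y)Γ'(y) − ΛQ'(y)Γ(y) = 1/y holds for all y > 0. -/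
open Real Filter Asymptotics

/-- The resonance `ΛQ(y) = 2y/(1+y²)`. -/
noncomputable def LamQ (y : ℝ) : ℝ := 2 * y / (1 + y ^ 2)

/-- The second element `Γ` of the kernel of `H`. -/
noncomputable def Gam (y : ℝ) : ℝ :=
  (2 * y / (1 + y ^ 2)) * (y ^ 2 / 8 + Real.log y / 2 - 1 / (8 * y ^ 2))

/-!
Write `Γ = ΛQ · F` with `F y = y²/8 + (log y)/2 - 1/(8y²)` (`gamRatio`). Then `F 1 = 0` and
`F' = 1/(y ΛQ²)`, so the integral formula is the fundamental theorem of calculus, and the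
Wronskian is `ΛQ Γ' - ΛQ' Γ = ΛQ² F' = 1/y`. Since `y ΛQ² F'` is constant, reduction of order
turns the resonance equation `H ΛQ = 0` into `H Γ = 0`. For the asymptotics, `y Γ(y)` extends
continuously to `y = 0` with value `-1/4`, and `Γ y - y/4 = y log y/(1+y²) - 1/(4y)`.
-/

-- `radialOp Vfun` is the operator `H`.
noncomputable def radialOp (W u : ℝ → ℝ) (y : ℝ) : ℝ :=
  -deriv (deriv u) y - (1 / y) * deriv u y + W y * u y / y ^ 2

theorem wronskian_mul {u f : ℝ → ℝ} {y : ℝ} (hu : DifferentiableAt ℝ u y)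
    (hf : DifferentiableAt ℝ f y) :
    u y * deriv (fun z => u z * f z) y - deriv u y * (u y * f y) = u y ^ 2 * deriv f y := by
  rw [deriv_fun_mul hu hf]
  ring

-- Reduction of order: `radialOp W (u f) = f · radialOp W u - (y u² f')' / (y u)`.
theorem radialOp_mul_of_hasDerivAt_flux {W u f : ℝ → ℝ} {y : ℝ} (hy : y ≠ 0) (huy : u y ≠ 0)
    (hu : ContDiffAt ℝ 2 u y) (hf : ContDiffAt ℝ 2 f y)
    (hflux : HasDerivAt (fun z => z * u z ^ 2 * deriv f z) 0 y) :
    radialOp W (fun z => u z * f z) y = f y * radialOp W u y := by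
  have hdiff : ∀ {g : ℝ → ℝ}, ContDiffAt ℝ 2 g y →
      (∀ᶠ z in nhds y, DifferentiableAt ℝ g z) ∧ DifferentiableAt ℝ (deriv g) y :=
    fun hg => ⟨(hg.eventually (by simp)).mono fun z hz => hz.differentiableAt (by simp),
      (hg.derivWithin (m := 1) (by norm_num)).differentiableAt (by simp)⟩
  obtain ⟨hu₁, hu₂⟩ := hdiff hu
  obtain ⟨hf₁, hf₂⟩ := hdiff hf
  have hprod : deriv (fun z => u z * f z) =ᶠ[nhds y] fun z => deriv u z * f z + u z * deriv f z :=
    (hu₁.and hf₁).mono fun z hz => deriv_fun_mul hz.1 hz.2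
  have hu₀ := hu₁.self_of_nhds
  have hf₀ := hf₁.self_of_nhds
  have hflux' : u y * (u y * deriv f y + 2 * y * deriv u y * deriv f y
      + y * u y * deriv (deriv f) y) = 0 := by
    have := ((hasDerivAt_id y).mul (hu₀.hasDerivAt.pow 2)).mul hf₂.hasDerivAt
    rw [hflux.unique this]
    simp only [Pi.pow_apply, Pi.mul_apply, id_eq, one_mul, Nat.cast_ofNat]
    ring
  replace hflux' := (mul_eq_zero.mp hflux').resolve_left huy
  unfold radialOp
  rw [hprod.deriv_eq, ((hu₂.hasDerivAt.fun_mul hf₀.hasDerivAt).fun_add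
    (hu₀.hasDerivAt.fun_mul hf₂.hasDerivAt)).deriv, deriv_fun_mul hu₀ hf₀]
  field_simp
  linear_combination (-y) * hflux'

theorem hasDerivAt_LamQ (y : ℝ) : HasDerivAt LamQ (2 * (1 - y ^ 2) / (1 + y ^ 2) ^ 2) y := by
  have := ((hasDerivAt_id y).const_mul 2).div ((hasDerivAt_pow 2 y).const_add 1)
    (by positivity : 1 + y ^ 2 ≠ 0)
  refine this.congr_deriv ?_
  simp only [id]
  field_simp
  ring

theorem deriv_LamQ : deriv LamQ = fun y => 2 * (1 - y ^ 2) / (1 + y ^ 2) ^ 2 :=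
  funext fun y => (hasDerivAt_LamQ y).deriv

theorem contDiff_LamQ : ContDiff ℝ 2 LamQ := by
  unfold LamQ
  exact (contDiff_const.mul contDiff_id).div (by fun_prop) fun y => by positivity

theorem radialOp_Vfun_LamQ {y : ℝ} (hy : y ≠ 0) : radialOp Vfun LamQ y = 0 := by
  have h2 : HasDerivAt (fun y : ℝ => 2 * (1 - y ^ 2) / (1 + y ^ 2) ^ 2)
      ((4 * y ^ 3 - 12 * y) / (1 + y ^ 2) ^ 3) y := by
    have := (((hasDerivAt_pow 2 y).const_sub 1).const_mul 2).div
      (((hasDerivAt_pow 2 y).const_add 1).pow 2) (by positivity : (1 + y ^ 2) ^ 2 ≠ 0)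
    refine this.congr_deriv ?_
    simp only [Pi.pow_apply]
    field_simp
    ring
  unfold radialOp
  rw [deriv_LamQ, h2.deriv]
  unfold Vfun LamQ
  field_simp
  ring

theorem LamQ_pos {y : ℝ} (hy : 0 < y) : 0 < LamQ y := by
  unfold LamQ
  positivity

noncomputable def gamRatio (y : ℝ) : ℝ := y ^ 2 / 8 + Real.log y / 2 - 1 / (8 * y ^ 2)

theorem Gam_eq_mul_gamRatio : Gam = fun y => LamQ y * gamRatio y := rfl

theorem hasDerivAt_gamRatio {y : ℝ} (hy : y ≠ 0) :
    HasDerivAt gamRatio (1 / (y * LamQ y ^ 2)) y := by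
  have := (((hasDerivAt_pow 2 y).div_const 8).add ((Real.hasDerivAt_log hy).div_const 2)).sub
    ((hasDerivAt_const y (1 : ℝ)).div ((hasDerivAt_pow 2 y).const_mul 8) (by positivity))
  refine this.congr_deriv ?_
  unfold LamQ
  field_simp
  ring

theorem contDiffAt_gamRatio {y : ℝ} (hy : y ≠ 0) : ContDiffAt ℝ 2 gamRatio y := by
  unfold gamRatio
  have : ContDiffAt ℝ 2 log y := Real.contDiffAt_log.mpr hy
  fun_prop (disch := positivity)

theorem hasDerivAt_flux_gamRatio {y : ℝ} (hy : 0 < y) :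
    HasDerivAt (fun z => z * LamQ z ^ 2 * deriv gamRatio z) 0 y := by
  refine (hasDerivAt_const y 1).congr_of_eventuallyEq ?_
  filter_upwards [lt_mem_nhds hy] with z hz
  rw [(hasDerivAt_gamRatio hz.ne').deriv]
  have := (LamQ_pos hz).ne'
  field_simp

theorem gamRatio_eq_integral {y : ℝ} (hy : 0 < y) :
    gamRatio y = ∫ x in (1 : ℝ)..y, 1 / (x * LamQ x ^ 2) := by
  have hpos : ∀ x ∈ Set.uIcc (1 : ℝ) y, 0 < x := fun x hx =>
    lt_of_lt_of_le (lt_min one_pos hy) hx.1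
  have hcont : ContinuousOn (fun x => 1 / (x * LamQ x ^ 2)) (Set.uIcc 1 y) :=
    continuousOn_const.div (continuousOn_id.mul (contDiff_LamQ.continuous.continuousOn.pow 2))
      fun x hx => (mul_pos (hpos x hx) (pow_pos (LamQ_pos (hpos x hx)) 2)).ne'
  rw [intervalIntegral.integral_eq_sub_of_hasDerivAt
    (fun x hx => hasDerivAt_gamRatio (hpos x hx).ne') hcont.intervalIntegrable]
  simp [gamRatio]

theorem radialOp_Vfun_Gam {y : ℝ} (hy : 0 < y) : radialOp Vfun Gam y = 0 := by
  rw [Gam_eq_mul_gamRatio, radialOp_mul_of_hasDerivAt_flux hy.ne' (LamQ_pos hy).ne'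
    contDiff_LamQ.contDiffAt (contDiffAt_gamRatio hy.ne') (hasDerivAt_flux_gamRatio hy),
    radialOp_Vfun_LamQ hy.ne', mul_zero]

theorem wronskian_LamQ_Gam {y : ℝ} (hy : 0 < y) :
    LamQ y * deriv Gam y - deriv LamQ y * Gam y = 1 / y := by
  rw [Gam_eq_mul_gamRatio, wronskian_mul (contDiff_LamQ.differentiable (by norm_num) y)
    (hasDerivAt_gamRatio hy.ne').differentiableAt, (hasDerivAt_gamRatio hy.ne').deriv]
  have := (LamQ_pos hy).ne'
  field_simp

theorem tendsto_mul_Gam_nhdsGT_zero :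
    Tendsto (fun y => y * Gam y) (nhdsWithin 0 (Set.Ioi 0)) (nhds (-1 / 4)) := by
  set g : ℝ → ℝ := fun y => 2 / (1 + y ^ 2) * (y ^ 4 / 8 + y * (y * log y) / 2 - 1 / 8)
  have hg : Continuous g :=
    (continuous_const.div (by fun_prop) fun y => by positivity).mul
      (by fun_prop : Continuous fun y : ℝ => y ^ 4 / 8 + y * (y * log y) / 2 - 1 / 8)
  have hg0 : g 0 = -1 / 4 := by norm_num [g]
  refine (hg0 ▸ hg.tendsto 0).mono_left nhdsWithin_le_nhds |>.congr' ?_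
  filter_upwards [self_mem_nhdsWithin] with y (hy : 0 < y)
  have : 1 + y ^ 2 ≠ 0 := by positivity
  simp only [g, Gam]
  field_simp

theorem Gam_sub_div_four {y : ℝ} (hy : y ≠ 0) :
    Gam y - y / 4 = y * log y / (1 + y ^ 2) - 1 / (4 * y) := by
  have : 1 + y ^ 2 ≠ 0 := by positivity
  unfold Gam
  field_simp
  ring

theorem isBigO_Gam_sub_atTop :
    (fun y => Gam y - y / 4) =O[atTop] fun y => log y / y := by
  have hlog : ∀ᶠ y in atTop, 1 ≤ log y :=
    tendsto_log_atTop.eventually_ge_atTop 1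
  have h₁ : (fun y => y * log y / (1 + y ^ 2)) =O[atTop] fun y => log y / y := by
    refine IsBigO.of_bound 1 ?_
    filter_upwards [hlog, eventually_gt_atTop 0] with y hl hy
    rw [norm_of_nonneg (by positivity), one_mul, norm_of_nonneg (by positivity)]
    rw [div_le_div_iff₀ (by positivity) hy]
    nlinarith
  have h₂ : (fun y : ℝ => 1 / (4 * y)) =O[atTop] fun y => log y / y := by
    refine IsBigO.of_bound 1 ?_
    filter_upwards [hlog, eventually_gt_atTop 0] with y hl hy
    rw [norm_of_nonneg (by positivity), one_mul, norm_of_nonneg (by positivity)]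
    rw [div_le_div_iff₀ (by positivity) hy]
    nlinarith
  refine (h₁.sub h₂).congr' ?_ EventuallyEq.rfl
  filter_upwards [eventually_ne_atTop 0] with y hy
  exact (Gam_sub_div_four hy).symm

theorem isBigO_Gam_nhdsGT_zero : Gam =O[nhdsWithin 0 (Set.Ioi 0)] fun y => 1 / y := by
  refine isBigO_of_div_tendsto_nhds ?_ _ (tendsto_mul_Gam_nhdsGT_zero.congr' ?_)
  all_goals filter_upwards [self_mem_nhdsWithin] with y (hy : 0 < y)
  · simp [hy.ne']
  · simp [div_eq_mul_inv, mul_comm]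

/-- Properties of `Γ`: integral representation, `HΓ = 0`, asymptotics at `0` and `∞`,
and the Wronskian identity `ΛQ Γ' - ΛQ' Γ = 1/y`. -/
theorem Gamma_properties :
    (∀ y > (0:ℝ), Gam y = LamQ y * ∫ x in (1:ℝ)..y, 1 / (x * (LamQ x) ^ 2)) ∧
    (∀ y > (0:ℝ),
      -(deriv (deriv Gam) y) - (1 / y) * deriv Gam y + Vfun y * Gam y / y ^ 2 = 0) ∧
    Asymptotics.IsBigO (nhdsWithin 0 (Set.Ioi 0)) Gam (fun y => 1 / y) ∧
    Asymptotics.IsBigO Filter.atTop (fun y => Gam y - y / 4) (fun y => Real.log y / y) ∧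
    (∀ y > (0:ℝ), LamQ y * deriv Gam y - deriv LamQ y * Gam y = 1 / y) :=
  ⟨fun y hy => by rw [← gamRatio_eq_integral hy]; rfl, fun _ hy => radialOp_Vfun_Gam hy,
    isBigO_Gam_nhdsGT_zero, isBigO_Gam_sub_atTop, fun _ hy => wronskian_LamQ_Gam hy⟩
end

section
/- Let ℓ ≥ 2 be an integer and define sequences (c_k)_{1≤k≤ℓ}, (d_k)_{1≤k≤ℓ} by c₁ = ℓ/(ℓ−1), c_{k+1} = −((ℓ−k)/(ℓ−1))·c_k for 1 ≤ k ≤ ℓ−1; d₁ = −ℓ/(ℓ−1)², d₂ = −d₁ + c₁²/2, and d_{k+1} = −((ℓ−k)/(ℓ−1))·d_k + (ℓ(ℓ−k)/(ℓ−1)²)·c_k for 2 ≤ k ≤ ℓ−1. Define b_k^e(s) = c_k/s^k + d_k/(s^k log s) for 1 ≤ k ≤ ℓ and b_k^e ≡ 0 for k > ℓ. Then for every integer L ≥ ℓ and every 1 ≤ k ≤ L, as s → +∞: (b_k^e)'(s) + (k − 1 + 1/((1+δ_{1k}) log s))·b₁^e(s)·b_k^e(s) − b_{k+1}^e(s) =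 O( 1/(s^{k+1}(log s)²) ), where b_{L+1}^e := 0 and δ_{1k} is the Kronecker delta. -/
/-!
Substituting `b_k = c/s^k + d/(s^k log s)` into the `k`-th equation, the derivative and the
quadratic term produce terms of order `s^-(k+1)` and `s^-(k+1)/log s` whose coefficients
(`nextC`, `nextD`) are exactly the ones the recurrences for `c` and `d` assign to `b_{k+1}`;
for `k = ℓ` they vanish thanks to `c₁ = ℓ/(ℓ-1)` and `d₁ = -ℓ/(ℓ-1)²`, matching `b_{ℓ+1} = 0`.
Only terms of order `s^-(k+1)/log² s` and `s^-(k+1)/log³ s` survive.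
-/

open Real Filter Asymptotics
open scoped Topology

namespace ModulationSystem

noncomputable def ansatz (c d : ℝ) (k : ℕ) (s : ℝ) : ℝ := c / s ^ k + d / (s ^ k * log s)

theorem hasDerivAt_ansatz (c d : ℝ) (k : ℕ) {s : ℝ} (hs : s ≠ 0) (hlog : log s ≠ 0) :
    HasDerivAt (ansatz c d k)
      (ansatz (-k * c) (-k * d) (k + 1) s - d / (s ^ (k + 1) * log s ^ 2)) s := by
  have hpow : HasDerivAt (· ^ k) (k * s ^ k / s) s := by
    refine (hasDerivAt_pow k s).congr_deriv ?_
    rcases k with _ | k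
    · simp
    · rw [pow_succ]
      field_simp
      simp
  have hsk : s ^ k ≠ 0 := pow_ne_zero k hs
  refine (((hasDerivAt_const s c).div hpow hsk).add
    ((hasDerivAt_const s d).div (hpow.mul (hasDerivAt_log hs))
      (mul_ne_zero hsk hlog))).congr_deriv ?_
  simp only [ansatz, Pi.mul_apply]
  field_simp
  ring

def nextC (k : ℕ) (c₁ c : ℝ) : ℝ := (k - 1) * c₁ * c - k * c

def nextD (k : ℕ) (α c₁ d₁ c d : ℝ) : ℝ := (k - 1) * (c₁ * d + d₁ * c) + α * c₁ * c - k * d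

theorem residual_eq (k : ℕ) (E c₁ d₁ c d : ℝ) {s : ℝ} (hs : s ≠ 0) (hlog : log s ≠ 0) :
    deriv (ansatz c d k) s + ((k : ℝ) - 1 + 1 / (E * log s)) * ansatz c₁ d₁ 1 s * ansatz c d k s
        - ansatz (nextC k c₁ c) (nextD k E⁻¹ c₁ d₁ c d) (k + 1) s
      = ((k - 1) * d₁ * d + E⁻¹ * (c₁ * d + d₁ * c) - d + E⁻¹ * d₁ * d / log s)
          * (1 / (s ^ (k + 1) * log s ^ 2)) := by
  rw [(hasDerivAt_ansatz c d k hs hlog).deriv, one_div (E * _), mul_inv]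
  simp only [ansatz, nextC, nextD]
  field_simp
  ring

theorem isBigO_residual (k : ℕ) (E c₁ d₁ c d : ℝ) :
    (fun s => deriv (ansatz c d k) s
        + ((k : ℝ) - 1 + 1 / (E * log s)) * ansatz c₁ d₁ 1 s * ansatz c d k s
        - ansatz (nextC k c₁ c) (nextD k E⁻¹ c₁ d₁ c d) (k + 1) s)
      =O[atTop] fun s => 1 / (s ^ (k + 1) * log s ^ 2) := by
  have hcoeff : Tendsto
      (fun s => (k - 1) * d₁ * d + E⁻¹ * (c₁ * d + d₁ * c) - d + E⁻¹ * d₁ * d / log s)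
      atTop (𝓝 ((k - 1) * d₁ * d + E⁻¹ * (c₁ * d + d₁ * c) - d)) := by
    simpa using tendsto_const_nhds.add (tendsto_const_nhds.div_atTop tendsto_log_atTop)
  refine ((hcoeff.isBigO_one ℝ).mul
    (isBigO_refl (fun s : ℝ => 1 / (s ^ (k + 1) * log s ^ 2)) atTop)).congr' ?_
    (.of_forall fun _ => one_mul _)
  filter_upwards [eventually_gt_atTop 1] with s hs
  exact (residual_eq k E c₁ d₁ c d (by positivity) (log_pos hs).ne').symm

theorem nextC_eq {ℓ : ℝ} (hℓ : ℓ ≠ 1) (k : ℕ) (x : ℝ) :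
    nextC k (ℓ / (ℓ - 1)) x = -((ℓ - k) / (ℓ - 1)) * x := by
  have : ℓ - 1 ≠ 0 := sub_ne_zero.mpr hℓ
  unfold nextC
  field_simp
  ring

theorem nextD_eq {ℓ : ℝ} (hℓ : ℓ ≠ 1) (k : ℕ) (x y : ℝ) :
    nextD k 1 (ℓ / (ℓ - 1)) (-ℓ / (ℓ - 1) ^ 2) x y
      = -((ℓ - k) / (ℓ - 1)) * y + (ℓ * (ℓ - k) / (ℓ - 1) ^ 2) * x := by
  have : ℓ - 1 ≠ 0 := sub_ne_zero.mpr hℓ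
  unfold nextD
  field_simp
  ring

end ModulationSystem

open ModulationSystem

theorem special_solutions_of_b_system_general (ℓ L : ℕ) (hℓ : 2 ≤ ℓ)
    (c d : ℕ → ℝ)
    (hc1 : c 1 = (ℓ : ℝ) / ((ℓ : ℝ) - 1))
    (hcrec : ∀ k : ℕ, 1 ≤ k → k ≤ ℓ - 1 →
      c (k + 1) = -(((ℓ : ℝ) - (k : ℝ)) / ((ℓ : ℝ) - 1)) * c k)
    (hd1 : d 1 = -(ℓ : ℝ) / ((ℓ : ℝ) - 1) ^ 2)
    (hd2 : d 2 = -d 1 + (c 1) ^ 2 / 2)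
    (hdrec : ∀ k : ℕ, 2 ≤ k → k ≤ ℓ - 1 →
      d (k + 1) = -(((ℓ : ℝ) - (k : ℝ)) / ((ℓ : ℝ) - 1)) * d k
        + ((ℓ : ℝ) * ((ℓ : ℝ) - (k : ℝ)) / ((ℓ : ℝ) - 1) ^ 2) * c k)
    (be : ℕ → ℝ → ℝ)
    (hbe : ∀ k : ℕ, 1 ≤ k → k ≤ ℓ → ∀ s : ℝ,
      be k s = c k / s ^ k + d k / (s ^ k * Real.log s))
    (hbe0 : ∀ k : ℕ, ℓ < k → ∀ s : ℝ, be k s = 0) :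
    ∀ k : ℕ, 1 ≤ k → k ≤ L →
      Asymptotics.IsBigO Filter.atTop
        (fun s : ℝ => deriv (be k) s
          + ((k : ℝ) - 1 + 1 / ((1 + if k = 1 then (1:ℝ) else 0) * Real.log s))
            * be 1 s * be k s
          - be (k + 1) s)
        (fun s : ℝ => 1 / (s ^ (k + 1) * (Real.log s) ^ 2)) := by
  intro k hk _
  have hvanish : ∀ j, ℓ < j → be j = 0 := fun j hj => funext (hbe0 j hj)
  rcases lt_or_ge ℓ k with hℓk | hkℓ
  · simpa [hvanish k hℓk, hvanish (k + 1) (by omega)] using isBigO_zero _ _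
  have hℓ1 : (ℓ : ℝ) ≠ 1 := by exact_mod_cast (by omega : ℓ ≠ 1)
  have hansatz : ∀ j, 1 ≤ j → j ≤ ℓ → be j = ansatz (c j) (d j) j :=
    fun j hj₁ hjℓ => funext (hbe j hj₁ hjℓ)
  set α : ℝ := (1 + if k = 1 then (1:ℝ) else 0)⁻¹ with hα
  have hα_of_ne : k ≠ 1 → α = 1 := fun h => by simp [hα, h]
  have hnext : be (k + 1)
      = ansatz (nextC k (c 1) (c k)) (nextD k α (c 1) (d 1) (c k) (d k)) (k + 1) := by
    rcases hkℓ.lt_or_eq with hkℓ | rfl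
    · have hC : c (k + 1) = nextC k (c 1) (c k) := by
        rw [hcrec k hk (by omega), hc1, nextC_eq hℓ1]
      have hD : d (k + 1) = nextD k α (c 1) (d 1) (c k) (d k) := by
        rcases hk.eq_or_lt with rfl | hk
        · norm_num [hd2, hα, nextD]
          ring
        · rw [hdrec k hk (by omega), hα_of_ne hk.ne', hc1, hd1, nextD_eq hℓ1]
      rw [hansatz (k + 1) (by omega) hkℓ, hC, hD]
    · rw [hvanish (k + 1) (by omega), hα_of_ne (by omega), hc1, hd1,
        nextC_eq hℓ1, nextD_eq hℓ1]
      funext s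
      simp [ansatz]
  simp only [hansatz k hk hkℓ, hansatz 1 le_rfl (by omega), hnext]
  exact isBigO_residual k _ (c 1) (d 1) (c k) (d k)

/-- The special quantized-rate solutions `b_k^e(s) = c_k/s^k + d_k/(s^k log s)` solve
the modulation ODE system up to errors of size `O(1/(s^{k+1} (log s)²))`. -/
theorem special_solutions_of_b_system (ℓ L : ℕ) (hℓ : 2 ≤ ℓ) (hL : ℓ ≤ L)
    (c d : ℕ → ℝ)
    (hc1 : c 1 = (ℓ : ℝ) / ((ℓ : ℝ) - 1))
    (hcrec : ∀ k : ℕ, 1 ≤ k → k ≤ ℓ - 1 →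
      c (k + 1) = -(((ℓ : ℝ) - (k : ℝ)) / ((ℓ : ℝ) - 1)) * c k)
    (hd1 : d 1 = -(ℓ : ℝ) / ((ℓ : ℝ) - 1) ^ 2)
    (hd2 : d 2 = -d 1 + (c 1) ^ 2 / 2)
    (hdrec : ∀ k : ℕ, 2 ≤ k → k ≤ ℓ - 1 →
      d (k + 1) = -(((ℓ : ℝ) - (k : ℝ)) / ((ℓ : ℝ) - 1)) * d k
        + ((ℓ : ℝ) * ((ℓ : ℝ) - (k : ℝ)) / ((ℓ : ℝ) - 1) ^ 2) * c k)
    (be : ℕ → ℝ → ℝ)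
    (hbe : ∀ k : ℕ, 1 ≤ k → k ≤ ℓ → ∀ s : ℝ,
      be k s = c k / s ^ k + d k / (s ^ k * Real.log s))
    (hbe0 : ∀ k : ℕ, ℓ < k → ∀ s : ℝ, be k s = 0) :
    ∀ k : ℕ, 1 ≤ k → k ≤ L →
      Asymptotics.IsBigO Filter.atTop
        (fun s : ℝ => deriv (be k) s
          + ((k : ℝ) - 1 + 1 / ((1 + if k = 1 then (1:ℝ) else 0) * Real.log s))
            * be 1 s * be k s
          - be (k + 1) s)
        (fun s : ℝ => 1 / (s ^ (k + 1) * (Real.log s) ^ 2)) :=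
  special_solutions_of_b_system_general ℓ L hℓ c d hc1 hcrec hd1 hd2 hdrec be hbe hbe0
end

section
/- Let ℓ ≥ 2 be an integer and let c₁ = ℓ/(ℓ−1), c_{k+1} = −((ℓ−k)/(ℓ−1))·c_k for 1 ≤ k ≤ ℓ−1. Let A_ℓ be the ℓ×ℓ real matrix with entries: (A_ℓ)_{1,1} = 1; (A_ℓ)_{k,k} = (ℓ−k)/(ℓ−1) for 2 ≤ k ≤ ℓ (in particular (A_ℓ)_{ℓ,ℓ} = 0); (A_ℓ)_{k,k+1} = 1 for 1 ≤ k ≤ ℓ−1; (A_ℓ)_{k,1} = −(k−1)·c_k for 2 ≤ k ≤ ℓ; and all other entries zero. Then A_ℓ is diagonalizable over ℝ: there exists an invertible ℓ×ℓ real matrix P_ℓ with A_ℓ = P_ℓ⁻¹ D_ℓ P_ℓ, where D_ℓ is the diagonal matrix with diagonal entries (−1, 2/(ℓ−1), 3/(ℓ−1), …, (ℓ−1)/(ℓ−1), ℓ/(ℓ−1)). In particular A_ℓ has exactly one negative eigenvalue −1 and ℓ−1 positive eigenvalues k/(ℓ−1), 2 ≤ k ≤ ℓ. -/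
/-!
Write `ℓ = n + 1` and `λ = x / n`. For every `x`, the row `w_j = n ^ j (x)_{n-j}` (falling
factorial) satisfies the left-eigenvector equation `w A = λ w` in each column `j ≥ 1`, where `A`
is upper bidiagonal. In column `0`, the closed form `c_{k+1} = (-1)^k (n+1) n!/(n-k)! / n^(k+1)` and
the Chu–Vandermonde identity turn the equation into `(n - x) (x)_n + n (n+1) (x-2)_{n-1} = 0`, and
`(x - 1)` times its left side is `-(x + n) (x-1)_{n+1}`. So `x = -n, 2, …, n+1` give `ℓ` left
eigenvectors with the distinct eigenvalues `-1, 2/n, …, (n+1)/n`; they are linearly independent,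
hence are the rows of an invertible `P` with `P A = D P`.
-/

open Matrix Polynomial Finset
open scoped Nat

section Pochhammer

variable {R : Type*} [CommRing R]

theorem descPochhammer_smeval_eq_eval (n : ℕ) (x : R) :
    (descPochhammer ℤ n).smeval x = (descPochhammer R n).eval x := by
  rw [← aeval_eq_smeval, aeval_def, ← eval_map, descPochhammer_map]

theorem descPochhammer_eval_add (n : ℕ) (x y : R) :
    (descPochhammer R n).eval (x + y) =
      ∑ k ∈ range (n + 1), n.choose k * (descPochhammer R k).eval x *
        (descPochhammer R (n - k)).eval y := by
  simp only [← descPochhammer_smeval_eq_eval, Ring.descPochhammer_smeval_add n (Commute.all x y),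
    Nat.sum_antidiagonal_eq_sum_range_succ_mk, mul_assoc]

theorem descPochhammer_succ_eval_left (n : ℕ) (x : R) :
    (descPochhammer R (n + 1)).eval x = x * (descPochhammer R n).eval (x - 1) := by
  rw [descPochhammer_succ_left, eval_mul, eval_X, eval_comp, eval_sub, eval_X, eval_one]

theorem descPochhammer_eval_neg_one (n : ℕ) :
    (descPochhammer R n).eval (-1) = (-1) ^ n * n ! := by
  have h := ascPochhammer_eval_neg_eq_descPochhammer R (-1 : R) n
  rw [neg_neg, ascPochhammer_eval_one] at h
  rw [h, ← mul_assoc, ← mul_pow]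
  norm_num

theorem sum_mul_choose_mul_descPochhammer_eval (n : ℕ) (x y : R) :
    ∑ k ∈ range (n + 1), k * n.choose k * (descPochhammer R k).eval x *
        (descPochhammer R (n - k)).eval y =
      n * x * (descPochhammer R (n - 1)).eval (x - 1 + y) := by
  cases n with
  | zero => simp
  | succ m =>
    rw [sum_range_succ', descPochhammer_eval_add]
    simp only [Nat.add_sub_cancel, Nat.cast_zero, zero_mul, add_zero, mul_sum]
    refine sum_congr rfl fun k _ => ?_
    have hchoose : ((k + 1 : ℕ) : R) * (m + 1).choose (k + 1) = (m + 1 : ℕ) * m.choose k := by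
      have := congrArg (Nat.cast : ℕ → R) (Nat.add_one_mul_choose_eq m k)
      push_cast at this ⊢
      linear_combination -this
    rw [hchoose, descPochhammer_succ_eval_left, Nat.add_sub_add_right]
    ring

theorem sum_neg_one_pow_mul_descFactorial_mul_descPochhammer_eval (n : ℕ) (x : R) :
    ∑ k ∈ range (n + 1), (-1) ^ k * k * n.descFactorial k * (descPochhammer R (n - k)).eval x =
      -n * (descPochhammer R (n - 1)).eval (x - 2) := by
  have h := sum_mul_choose_mul_descPochhammer_eval n (-1) x
  simp only [descPochhammer_eval_neg_one] at h
  rw [show (-1 : R) - 1 + x = x - 2 by ring] at h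
  simp only [Nat.descFactorial_eq_factorial_mul_choose, Nat.cast_mul]
  rw [show -(n : R) = n * -1 by ring, ← h]
  exact sum_congr rfl fun k _ => by ring

theorem sub_one_mul_descPochhammer_eval_relation (n : ℕ) (x : R) :
    (x - 1) * ((n - x) * (descPochhammer R n).eval x
        + n * (n + 1) * (descPochhammer R (n - 1)).eval (x - 2)) =
      -(x + n) * (descPochhammer R (n + 1)).eval (x - 1) := by
  cases n with
  | zero =>
    simp only [Nat.cast_zero, zero_sub, zero_add, add_zero, descPochhammer_zero,
      descPochhammer_one, eval_one, eval_X]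
    ring
  | succ m =>
    have h1 := descPochhammer_succ_eval m (x - 1)
    have h2 := descPochhammer_succ_eval_left m (x - 1)
    rw [show x - 1 - 1 = x - 2 by ring] at h2
    rw [descPochhammer_succ_eval_left m x, Nat.add_sub_cancel,
      descPochhammer_succ_eval (m + 1) (x - 1), h1]
    push_cast
    linear_combination (m + 2 : R) * (m + 1) * (h1 - h2)

end Pochhammer

theorem Matrix.isUnit_det_and_eq_of_vecMul_eq_smul {K ι : Type*} [Field K] [Fintype ι]
    [DecidableEq ι] {A P : Matrix ι ι K} {μ : ι → K} (hμ : Function.Injective μ)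
    (hP : ∀ i, P i ≠ 0) (hPA : ∀ i, P i ᵥ* A = μ i • P i) :
    IsUnit P.det ∧ A = P⁻¹ * diagonal μ * P := by
  have hindep : LinearIndependent K P :=
    Module.End.eigenvectors_linearIndependent' (mulVecLin Aᵀ) μ hμ P fun i =>
      ⟨Module.End.mem_eigenspace_iff.mpr (by rw [mulVecLin_apply, mulVec_transpose, hPA]), hP i⟩
  have hdet : IsUnit P.det :=
    (isUnit_iff_isUnit_det P).mp (linearIndependent_rows_iff_isUnit.mp hindep)
  have hmul : P * A = diagonal μ * P := by
    ext i j
    rw [mul_apply_eq_vecMul, hPA, diagonal_mul]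
    rfl
  refine ⟨hdet, ?_⟩
  rw [mul_assoc, ← hmul, ← mul_assoc, nonsing_inv_mul P hdet, one_mul]

-- The paper's `c_{k+1}` for `ℓ = n + 1`.
noncomputable def modulationCoeff (n k : ℕ) : ℝ :=
  (-1) ^ k * (n + 1) * n.descFactorial k / (n : ℝ) ^ (k + 1)

theorem eq_modulationCoeff {n : ℕ} (hn : n ≠ 0) {c : ℕ → ℝ} (hc1 : c 1 = (n + 1) / n)
    (hcrec : ∀ k, 1 ≤ k → k ≤ n → c (k + 1) = -((n + 1 - k) / n) * c k) :
    ∀ k ≤ n, c (k + 1) = modulationCoeff n k := by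
  have hn' : (n : ℝ) ≠ 0 := Nat.cast_ne_zero.mpr hn
  intro k hk
  induction k with
  | zero => simp [hc1, modulationCoeff]
  | succ k ih =>
    rw [hcrec (k + 1) (by omega) hk, ih (by omega), modulationCoeff, modulationCoeff,
      Nat.descFactorial_succ, Nat.cast_mul, Nat.cast_sub (by omega)]
    field_simp
    push_cast
    ring

-- `A_ℓ` for `ℓ = n + 1`; its `(0, 0)` entry `1` is the diagonal term `(n - 0) / n`.
noncomputable def modulationMatrix (n : ℕ) : Matrix (Fin (n + 1)) (Fin (n + 1)) ℝ :=
  of fun i j => (if (i : ℕ) + 1 = j then 1 else 0) + (if i = j then ((n : ℝ) - i) / n else 0)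
    + (if (j : ℕ) = 0 then -(i : ℝ) * modulationCoeff n i else 0)

theorem eq_modulationMatrix {n : ℕ} (hn : n ≠ 0) {c : ℕ → ℝ}
    (hc : ∀ k ≤ n, c (k + 1) = modulationCoeff n k) {A : Matrix (Fin (n + 1)) (Fin (n + 1)) ℝ}
    (hA : ∀ i j : Fin (n + 1), A i j =
      if (i : ℕ) = 0 ∧ (j : ℕ) = 0 then 1
      else if (j : ℕ) = i + 1 then 1
      else if i = j then ((n : ℝ) - i) / n
      else if (j : ℕ) = 0 then -(i : ℝ) * c (i + 1)
      else 0) :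
    A = modulationMatrix n := by
  ext i j
  rw [hA, modulationMatrix, of_apply, hc i (by omega)]
  have hn' : (n : ℝ) ≠ 0 := Nat.cast_ne_zero.mpr hn
  simp only [Fin.ext_iff]
  split_ifs with h₀ <;> first | omega | simp [h₀.1, hn'] | norm_num

theorem vecMul_modulationMatrix_zero {n : ℕ} (hn : n ≠ 0) (w : Fin (n + 1) → ℝ) :
    (w ᵥ* modulationMatrix n) 0 =
      w 0 - ∑ i : Fin (n + 1), (i : ℕ) * modulationCoeff n i * w i := by
  have hn' : (n : ℝ) ≠ 0 := Nat.cast_ne_zero.mpr hn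
  simp only [vecMul, dotProduct, modulationMatrix, of_apply, mul_add, sum_add_distrib]
  simp [div_self hn', sub_eq_add_neg, mul_comm]

theorem vecMul_modulationMatrix_succ {n : ℕ} (w : Fin (n + 1) → ℝ) (k : Fin n) :
    (w ᵥ* modulationMatrix n) k.succ = w k.castSucc + w k.succ * ((n - (k + 1)) / n) := by
  have hcast (i : Fin (n + 1)) : (i : ℕ) = k ↔ i = k.castSucc := by simp [Fin.ext_iff]
  simp [vecMul, dotProduct, modulationMatrix, mul_add, sum_add_distrib, hcast]

noncomputable def modulationEigenrow (n : ℕ) (x : ℝ) : Fin (n + 1) → ℝ :=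
  fun j => (n : ℝ) ^ (j : ℕ) * (descPochhammer ℝ (n - j)).eval x

theorem sum_mul_modulationCoeff_mul_modulationEigenrow {n : ℕ} (hn : n ≠ 0) (x : ℝ) :
    ∑ i : Fin (n + 1), (i : ℕ) * modulationCoeff n i * modulationEigenrow n x i =
      -(n + 1) * (descPochhammer ℝ (n - 1)).eval (x - 2) := by
  have hn' : (n : ℝ) ≠ 0 := Nat.cast_ne_zero.mpr hn
  calc ∑ i : Fin (n + 1), (i : ℕ) * modulationCoeff n i * modulationEigenrow n x i
      = (n + 1) / n * ∑ k ∈ range (n + 1),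
          (-1) ^ k * k * n.descFactorial k * (descPochhammer ℝ (n - k)).eval x := by
        simp only [modulationEigenrow]
        rw [Fin.sum_univ_eq_sum_range (fun k => k * modulationCoeff n k *
          ((n : ℝ) ^ k * (descPochhammer ℝ (n - k)).eval x)), mul_sum]
        refine sum_congr rfl fun k _ => ?_
        rw [modulationCoeff, pow_succ]
        field_simp
    _ = -(n + 1) * (descPochhammer ℝ (n - 1)).eval (x - 2) := by
        rw [sum_neg_one_pow_mul_descFactorial_mul_descPochhammer_eval]
        field_simp

theorem modulationEigenrow_vecMul {n : ℕ} (hn : n ≠ 0) {x : ℝ} (hx : x ≠ 1)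
    (hroot : (x + n) * (descPochhammer ℝ (n + 1)).eval (x - 1) = 0) :
    modulationEigenrow n x ᵥ* modulationMatrix n = (x / n) • modulationEigenrow n x := by
  have hn' : (n : ℝ) ≠ 0 := Nat.cast_ne_zero.mpr hn
  funext j
  refine Fin.cases ?_ (fun k => ?_) j
  · have hrel := sub_one_mul_descPochhammer_eval_relation n x
    rw [neg_mul, hroot, neg_zero, mul_eq_zero] at hrel
    have hE := hrel.resolve_left (sub_ne_zero.mpr hx)
    rw [vecMul_modulationMatrix_zero hn, sum_mul_modulationCoeff_mul_modulationEigenrow hn]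
    simp only [modulationEigenrow, Fin.val_zero, pow_zero, one_mul, Nat.sub_zero, Pi.smul_apply,
      smul_eq_mul]
    field_simp
    linear_combination hE
  · have hsucc : n - k = (n - (k + 1)) + 1 := by omega
    rw [vecMul_modulationMatrix_succ]
    simp only [modulationEigenrow, Fin.val_castSucc, Fin.val_succ, Pi.smul_apply, smul_eq_mul]
    rw [hsucc, descPochhammer_succ_eval, Nat.cast_sub (by omega), pow_succ]
    field_simp
    push_cast
    ring

theorem modulationEigenrow_ne_zero (n : ℕ) (x : ℝ) : modulationEigenrow n x ≠ 0 := by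
  intro h
  have := congrFun h (Fin.last n)
  simp [modulationEigenrow] at this

noncomputable def modulationEigenvalue (n : ℕ) (p : Fin (n + 1)) : ℝ :=
  if (p : ℕ) = 0 then -1 else ((p : ℕ) + 1) / n

theorem modulationEigenvalue_injective {n : ℕ} (hn : n ≠ 0) :
    Function.Injective (modulationEigenvalue n) := by
  have hn' : (0 : ℝ) < n := by positivity
  intro p q hpq
  simp only [modulationEigenvalue] at hpq
  split_ifs at hpq with hp hq hq
  · exact Fin.ext (hp.trans hq.symm)
  · have : (0 : ℝ) < ((q : ℕ) + 1) / n := by positivity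
    linarith
  · have : (0 : ℝ) < ((p : ℕ) + 1) / n := by positivity
    linarith
  · rw [div_left_inj' hn'.ne', add_left_inj, Nat.cast_inj] at hpq
    exact Fin.ext hpq

theorem modulationEigenrow_vecMul_modulationEigenvalue {n : ℕ} (hn : n ≠ 0) (p : Fin (n + 1)) :
    modulationEigenrow n (n * modulationEigenvalue n p) ᵥ* modulationMatrix n =
      modulationEigenvalue n p • modulationEigenrow n (n * modulationEigenvalue n p) := by
  have hn' : (n : ℝ) ≠ 0 := Nat.cast_ne_zero.mpr hn
  have hx : (n : ℝ) * modulationEigenvalue n p =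
      if (p : ℕ) = 0 then -(n : ℝ) else ((p : ℕ) : ℝ) + 1 := by
    unfold modulationEigenvalue
    split_ifs <;> field_simp
  have hx1 : (n : ℝ) * modulationEigenvalue n p ≠ 1 := by
    rw [hx]
    split_ifs with hp
    · linarith [(n.cast_nonneg : (0 : ℝ) ≤ n)]
    · simpa using hp
  have hroot : (n * modulationEigenvalue n p + n) *
      (descPochhammer ℝ (n + 1)).eval (n * modulationEigenvalue n p - 1) = 0 := by
    rw [hx]
    split_ifs with hp
    · simp
    · rw [add_sub_cancel_right, descPochhammer_eval_coe_nat_of_lt p.isLt, mul_zero]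
  convert modulationEigenrow_vecMul hn hx1 hroot using 2
  field_simp

/-- The linearization matrix `A_ℓ` of the modulation ODE system around the special
solution is diagonalizable over `ℝ`, with diagonal `(-1, 2/(ℓ-1), …, ℓ/(ℓ-1))`. -/
theorem modulation_matrix_diagonalizable (ℓ : ℕ) (hℓ : 2 ≤ ℓ)
    (c : ℕ → ℝ)
    (hc1 : c 1 = (ℓ : ℝ) / ((ℓ : ℝ) - 1))
    (hcrec : ∀ k : ℕ, 1 ≤ k → k ≤ ℓ - 1 →
      c (k + 1) = -(((ℓ : ℝ) - (k : ℝ)) / ((ℓ : ℝ) - 1)) * c k)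
    (A : Matrix (Fin ℓ) (Fin ℓ) ℝ)
    (hA : ∀ i j : Fin ℓ,
      A i j =
        if (i : ℕ) = 0 ∧ (j : ℕ) = 0 then 1
        else if (j : ℕ) = (i : ℕ) + 1 then 1
        else if i = j then ((ℓ : ℝ) - ((i : ℕ) + 1)) / ((ℓ : ℝ) - 1)
        else if (j : ℕ) = 0 then -((i : ℕ) : ℝ) * c ((i : ℕ) + 1)
        else 0) :
    ∃ P : Matrix (Fin ℓ) (Fin ℓ) ℝ, IsUnit P.det ∧
      A = P⁻¹ * Matrix.diagonal (fun i : Fin ℓ =>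
        if (i : ℕ) = 0 then (-1 : ℝ) else (((i : ℕ) : ℝ) + 1) / ((ℓ : ℝ) - 1)) * P := by
  obtain ⟨n, rfl⟩ : ∃ n, ℓ = n + 1 := ⟨ℓ - 1, by omega⟩
  have hn : n ≠ 0 := by omega
  simp only [Nat.cast_add, Nat.cast_one, add_sub_cancel_right, Nat.add_sub_cancel,
    add_sub_add_right_eq_sub] at hc1 hcrec hA ⊢
  rw [eq_modulationMatrix hn (eq_modulationCoeff hn hc1 hcrec) hA]
  exact ⟨of fun p => modulationEigenrow n (n * modulationEigenvalue n p),
    isUnit_det_and_eq_of_vecMul_eq_smul (modulationEigenvalue_injective hn)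
      (fun p => modulationEigenrow_ne_zero n _)
      (modulationEigenrow_vecMul_modulationEigenvalue hn)⟩
end

section
/- Let ℓ ≥ 2 be an integer, set c₁ = ℓ/(ℓ−1) and d₁ = −ℓ/(ℓ−1)². Let λ : [s₀,∞) → (0,∞) be continuous with λ(s) = c·s^{−c₁}(log s)^{−d₁}·(1+o(1)) as s → ∞ for some constant c > 0. Define t(s) = ∫_{s₀}^{s} λ(σ) dσ and T = ∫_{s₀}^{∞} λ(σ) dσ. Then T < ∞, and there exists c' > 0 such that, as s → ∞, λ(s) = c'·(1+o(1))·(T − t(s))^{ℓ} / |log(T − t(s))|^{ℓ/(ℓ−1)}. (Intermediate step: (T − t(s))^{ℓ−1} = c''·s^{−1}(log s)^{ℓ/(ℓ−1)}·(1+o(1)) for some c'' > 0.) -/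
/-!
Write `F = T - t`, so that `F' = -λ` and `F → 0`. With `q = -1/(ℓ-1)` and `b = ℓ/(ℓ-1)²` the
hypothesis reads `λ ≍ s^(q-1) (log s)^b`, which up to the factor `q` is the derivative of
`g = s^q (log s)^b`; L'Hôpital's rule gives `F ≍ g`, and integrability of `λ` comes from
`q - 1 < -1`. Then `log F ~ q log s`, and since `q ℓ = q - 1` and `b ℓ = b + ℓ/(ℓ-1)`, the
quantity `F^ℓ / |log F|^(ℓ/(ℓ-1))` has exactly the size of `λ`.
-/

open Real Filter MeasureTheory

/-- The blow-up time `T = ∫_{s₀}^∞ λ(σ) dσ`. -/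
noncomputable def Ttot (s₀ : ℝ) (lam : ℝ → ℝ) : ℝ := ∫ σ in Set.Ioi s₀, lam σ

/-- The original time variable `t(s) = ∫_{s₀}^s λ(σ) dσ`. -/
noncomputable def tOf (s₀ : ℝ) (lam : ℝ → ℝ) (s : ℝ) : ℝ := ∫ σ in s₀..s, lam σ

open Topology Asymptotics Set

noncomputable def powLog (q b s : ℝ) : ℝ := s ^ q * log s ^ b

namespace powLog

variable {q b s : ℝ}

lemma pos (hs : 1 < s) : 0 < powLog q b s := by
  unfold powLog
  have := log_pos hs
  positivity

lemma pow (hs : 1 < s) (n : ℕ) : powLog q b s ^ n = powLog (q * n) (b * n) s := by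
  simp only [powLog, mul_pow, ← rpow_natCast, ← rpow_mul (zero_lt_one.trans hs).le,
    ← rpow_mul (log_pos hs).le]

lemma log_eq (hs : 1 < s) : log (powLog q b s) = q * log s + b * log (log s) := by
  have hs0 : 0 < s := zero_lt_one.trans hs
  have hlog := log_pos hs
  rw [powLog, Real.log_mul (rpow_pos_of_pos hs0 _).ne' (rpow_pos_of_pos hlog _).ne',
    log_rpow hs0, log_rpow hlog]

lemma hasDerivAt (hs : 1 < s) :
    HasDerivAt (powLog q b) (powLog (q - 1) b s * (q + b / log s)) s := by
  have hs0 : 0 < s := zero_lt_one.trans hs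
  have hlog := log_pos hs
  have hpow : HasDerivAt (fun x : ℝ => x ^ q) (q * s ^ (q - 1)) s :=
    hasDerivAt_rpow_const (Or.inl hs0.ne')
  have hlogpow : HasDerivAt (fun x : ℝ => log x ^ b) (b * log s ^ (b - 1) * s⁻¹) s :=
    (hasDerivAt_rpow_const (Or.inl hlog.ne')).comp s (hasDerivAt_log hs0.ne')
  refine (hpow.mul hlogpow).congr_deriv ?_
  simp only [powLog, rpow_sub_one hs0.ne', rpow_sub_one hlog.ne']
  field_simp

lemma isLittleO_rpow {p : ℝ} (hqp : q < p) :
    powLog q b =o[atTop] fun s => s ^ p := by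
  have h := (isBigO_refl (fun s : ℝ => s ^ q) atTop).mul_isLittleO
    (isLittleO_log_rpow_rpow_atTop b (sub_pos.2 hqp))
  refine h.congr' .rfl ?_
  filter_upwards [eventually_gt_atTop 0] with s hs
  rw [← rpow_add hs, add_sub_cancel]

lemma tendsto_zero (hq : q < 0) : Tendsto (powLog q b) atTop (𝓝 0) := by
  refine (isLittleO_rpow (b := b) (p := q / 2) (by linarith)).trans_tendsto ?_
  simpa using tendsto_rpow_neg_atTop (y := -(q / 2)) (by linarith)

lemma tendsto_pow_div {F : ℝ → ℝ} {L : ℝ} (n : ℕ)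
    (hF : Tendsto (fun s => F s / powLog q b s) atTop (𝓝 L)) :
    Tendsto (fun s => F s ^ n / powLog (q * n) (b * n) s) atTop (𝓝 (L ^ n)) := by
  refine (hF.pow n).congr' ?_
  filter_upwards [eventually_gt_atTop 1] with s hs
  rw [div_pow, powLog.pow hs]

end powLog

lemma tendsto_div_powLog_neg_iff {f : ℝ → ℝ} {a b c : ℝ} :
    Tendsto (fun s => f s / powLog (-a) b s) atTop (𝓝 c) ↔
      Tendsto (fun s => f s * s ^ a * log s ^ (-b)) atTop (𝓝 c) := by
  refine tendsto_congr' ?_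
  filter_upwards [eventually_gt_atTop 1] with s hs
  rw [powLog, rpow_neg (zero_lt_one.trans hs).le, rpow_neg (log_pos hs).le]
  field_simp

lemma integrableOn_Ioi_of_tendsto_div_powLog {f : ℝ → ℝ} {a q b c : ℝ}
    (hf : ContinuousOn f (Ici a)) (hq : q < -1)
    (hlim : Tendsto (fun s => f s / powLog q b s) atTop (𝓝 c)) :
    IntegrableOn f (Ioi a) := by
  have hO : f =O[atTop] powLog q b := by
    refine isBigO_of_div_tendsto_nhds ?_ c hlim
    filter_upwards [eventually_gt_atTop 1] with s hs h
    exact absurd h (powLog.pos hs).ne'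
  have hrpow : f =O[atTop] fun s => s ^ ((q - 1) / 2) :=
    (hO.trans_isLittleO (powLog.isLittleO_rpow (by linarith))).isBigO
  have hmeas : StronglyMeasurableAtFilter f atTop :=
    ⟨Ioi a, Ioi_mem_atTop a, (hf.mono Ioi_subset_Ici_self).aestronglyMeasurable measurableSet_Ioi⟩
  have hfi : IntegrableAtFilter f atTop :=
    hrpow.integrableAtFilter hmeas (integrableAtFilter_rpow_atTop_iff.2 (by linarith))
  exact (integrableOn_Ici_iff_integrableAtFilter_atTop.2
    ⟨hfi, hf.locallyIntegrableOn measurableSet_Ici⟩).mono_set Ioi_subset_Ici_self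

lemma tendsto_Ttot_sub_tOf {s₀ : ℝ} {lam : ℝ → ℝ} (h : IntegrableOn lam (Ioi s₀)) :
    Tendsto (fun s => Ttot s₀ lam - tOf s₀ lam s) atTop (𝓝 0) := by
  have ht : Tendsto (tOf s₀ lam) atTop (𝓝 (Ttot s₀ lam)) :=
    intervalIntegral_tendsto_integral_Ioi s₀ h tendsto_id
  simpa using (tendsto_const_nhds (x := Ttot s₀ lam)).sub ht

lemma hasDerivAt_Ttot_sub_tOf {s₀ s : ℝ} {lam : ℝ → ℝ} (hcont : ContinuousOn lam (Ici s₀))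
    (hint : IntegrableOn lam (Ioi s₀)) (hs : s₀ < s) :
    HasDerivAt (fun s => Ttot s₀ lam - tOf s₀ lam s) (-lam s) s := by
  have hii : IntervalIntegrable lam volume s₀ s := by
    rw [intervalIntegrable_iff, uIoc_of_le hs.le]
    exact hint.mono_set Ioc_subset_Ioi_self
  have hmeas : StronglyMeasurableAtFilter lam (𝓝 s) :=
    ⟨Ioi s₀, Ioi_mem_nhds hs,
      (hcont.mono Ioi_subset_Ici_self).aestronglyMeasurable measurableSet_Ioi⟩
  simpa [tOf, Pi.sub_def] using (hasDerivAt_const s (Ttot s₀ lam)).sub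
    (intervalIntegral.integral_hasDerivAt_right hii hmeas (hcont.continuousAt (Ici_mem_nhds hs)))

lemma tendsto_div_powLog_of_hasDerivAt {F f : ℝ → ℝ} {q b c : ℝ} (hq : q < 0)
    (hf : Tendsto (fun s => f s / powLog (q - 1) b s) atTop (𝓝 c))
    (hF' : ∀ᶠ s in atTop, HasDerivAt F (-f s) s) (hF0 : Tendsto F atTop (𝓝 0)) :
    Tendsto (fun s => F s / powLog q b s) atTop (𝓝 (-c / q)) := by
  have hcorr : Tendsto (fun s => q + b / log s) atTop (𝓝 q) := by
    simpa using tendsto_const_nhds.add (tendsto_const_nhds.div_atTop tendsto_log_atTop)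
  refine HasDerivAt.lhopital_zero_atTop hF'
    ((eventually_gt_atTop 1).mono fun s hs => powLog.hasDerivAt hs) ?_ hF0
    (powLog.tendsto_zero hq) ?_
  · filter_upwards [eventually_gt_atTop 1, hcorr.eventually (eventually_lt_nhds hq)]
      with s hs hneg
    exact mul_ne_zero (powLog.pos hs).ne' hneg.ne
  · refine (hf.neg.div hcorr hq.ne).congr fun s => ?_
    simp only [Pi.div_apply, neg_div, div_div]

lemma tendsto_log_div_log_of_tendsto_div_powLog {F : ℝ → ℝ} {q b L : ℝ} (hL : 0 < L)
    (hF : Tendsto (fun s => F s / powLog q b s) atTop (𝓝 L)) :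
    Tendsto (fun s => log (F s) / log s) atTop (𝓝 q) := by
  have hratio : Tendsto (fun s => log (F s / powLog q b s) / log s) atTop (𝓝 0) :=
    (hF.log hL.ne').div_atTop tendsto_log_atTop
  have hloglog : Tendsto (fun s => log (log s) / log s) atTop (𝓝 0) :=
    isLittleO_log_id_atTop.tendsto_div_nhds_zero.comp tendsto_log_atTop
  have hsum := (hratio.add (tendsto_const_nhds (x := q))).add (hloglog.const_mul b)
  rw [zero_add, mul_zero, add_zero] at hsum
  refine hsum.congr' ?_
  filter_upwards [eventually_gt_atTop 1, hF.eventually (eventually_ne_nhds hL.ne')]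
    with s hs hFs
  have hlog := log_pos hs
  rw [log_div (div_ne_zero_iff.1 hFs).1 (powLog.pos hs).ne', powLog.log_eq hs]
  field_simp
  ring

lemma tendsto_div_pow_div_abs_log_rpow {F f : ℝ → ℝ} {q b r c L : ℝ} {n : ℕ}
    (hq : q < 0) (hL : 0 < L) (hqn : q * n = q - 1) (hbn : b * n = b + r)
    (hf : Tendsto (fun s => f s / powLog (q - 1) b s) atTop (𝓝 c))
    (hF : Tendsto (fun s => F s / powLog q b s) atTop (𝓝 L)) :
    Tendsto (fun s => f s / (F s ^ n / |log (F s)| ^ r)) atTop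
      (𝓝 (c * (-q) ^ r / L ^ n)) := by
  have habs : Tendsto (fun s => |log (F s)| / log s) atTop (𝓝 (-q)) := by
    rw [← abs_of_neg hq]
    refine (tendsto_log_div_log_of_tendsto_div_powLog hL hF).abs.congr' ?_
    filter_upwards [eventually_gt_atTop 1] with s hs
    rw [abs_div, abs_of_pos (log_pos hs)]
  refine ((hf.mul (habs.rpow_const (Or.inl (neg_pos.2 hq).ne'))).div
    (powLog.tendsto_pow_div n hF) (pow_pos hL n).ne').congr' ?_
  filter_upwards [eventually_gt_atTop 1, hF.eventually (eventually_ne_nhds hL.ne')]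
    with s hs hFs
  have hlog := log_pos hs
  have hF0 := (div_ne_zero_iff.1 hFs).1
  simp only [Pi.div_apply]
  rw [hqn, hbn, powLog, powLog, rpow_add hlog, div_rpow (abs_nonneg _) hlog.le]
  have := rpow_pos_of_pos (zero_lt_one.trans hs) (q - 1)
  have := rpow_pos_of_pos hlog b
  field_simp

theorem blowup_rate_conversion_general (ℓ : ℕ) (hℓ : 2 ≤ ℓ) (s₀ : ℝ)
    (lam : ℝ → ℝ) (hcont : ContinuousOn lam (Set.Ici s₀))
    (c : ℝ) (hc : 0 < c)
    (hasymp : Filter.Tendsto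
      (fun s : ℝ => lam s * s ^ ((ℓ : ℝ) / ((ℓ : ℝ) - 1))
        * Real.log s ^ (-(ℓ : ℝ) / ((ℓ : ℝ) - 1) ^ 2))
      Filter.atTop (nhds c)) :
    MeasureTheory.IntegrableOn lam (Set.Ioi s₀) ∧
    (∃ c'' > (0:ℝ), Filter.Tendsto
      (fun s : ℝ => (Ttot s₀ lam - tOf s₀ lam s) ^ (ℓ - 1)
        / (s⁻¹ * Real.log s ^ ((ℓ : ℝ) / ((ℓ : ℝ) - 1))))
      Filter.atTop (nhds c'')) ∧
    (∃ c' > (0:ℝ), Filter.Tendsto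
      (fun s : ℝ => lam s
        / ((Ttot s₀ lam - tOf s₀ lam s) ^ ℓ
          / |Real.log (Ttot s₀ lam - tOf s₀ lam s)| ^ ((ℓ : ℝ) / ((ℓ : ℝ) - 1))))
      Filter.atTop (nhds c')) := by
  have he : (1 : ℝ) ≤ (ℓ : ℝ) - 1 := by
    have : (2 : ℝ) ≤ ℓ := by exact_mod_cast hℓ
    linarith
  have hℓ₁ : ((ℓ - 1 : ℕ) : ℝ) = (ℓ : ℝ) - 1 := by rw [Nat.cast_sub (by omega), Nat.cast_one]
  set q : ℝ := -1 / ((ℓ : ℝ) - 1) with hq_def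
  set b : ℝ := ℓ / ((ℓ : ℝ) - 1) ^ 2 with hb_def
  have hq : q < 0 := div_neg_of_neg_of_pos (by norm_num) (by linarith)
  have hq1 : q - 1 = -(ℓ / ((ℓ : ℝ) - 1)) := by rw [hq_def]; field_simp; ring
  have hlam : Tendsto (fun s => lam s / powLog (q - 1) b s) atTop (𝓝 c) := by
    rw [hq1, tendsto_div_powLog_neg_iff, ← neg_div]
    exact hasymp
  have hInt := integrableOn_Ioi_of_tendsto_div_powLog hcont (by linarith) hlam
  have hF := tendsto_div_powLog_of_hasDerivAt hq hlam
    ((eventually_gt_atTop s₀).mono fun s hs => hasDerivAt_Ttot_sub_tOf hcont hInt hs)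
    (tendsto_Ttot_sub_tOf hInt)
  have hL : 0 < -c / q := div_pos_of_neg_of_neg (by linarith) hq
  have hqe : q * ((ℓ : ℝ) - 1) = -1 := by rw [hq_def]; field_simp
  have hbe : b * ((ℓ : ℝ) - 1) = ℓ / ((ℓ : ℝ) - 1) := by rw [hb_def]; field_simp
  refine ⟨hInt, ⟨_, pow_pos hL _, (powLog.tendsto_pow_div (ℓ - 1) hF).congr fun s => ?_⟩,
    ⟨_, div_pos (mul_pos hc (rpow_pos_of_pos (neg_pos.2 hq) _)) (pow_pos hL _),
      tendsto_div_pow_div_abs_log_rpow hq hL ?_ ?_ hlam hF⟩⟩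
  · rw [powLog, hℓ₁, hqe, hbe, rpow_neg_one]
  · linear_combination hqe
  · linear_combination hbe

/-- Conversion of the scaling law `λ(s) ≍ c s^{-ℓ/(ℓ-1)} (log s)^{ℓ/(ℓ-1)²}` in renormalized
time into the quantized blow-up rate `λ ≍ c' (T-t)^ℓ / |log(T-t)|^{ℓ/(ℓ-1)}` in original time. -/
theorem blowup_rate_conversion (ℓ : ℕ) (hℓ : 2 ≤ ℓ) (s₀ : ℝ) (hs₀ : 1 < s₀)
    (lam : ℝ → ℝ) (hcont : ContinuousOn lam (Set.Ici s₀))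
    (hpos : ∀ s : ℝ, s₀ ≤ s → 0 < lam s)
    (c : ℝ) (hc : 0 < c)
    (hasymp : Filter.Tendsto
      (fun s : ℝ => lam s * s ^ ((ℓ : ℝ) / ((ℓ : ℝ) - 1))
        * Real.log s ^ (-(ℓ : ℝ) / ((ℓ : ℝ) - 1) ^ 2))
      Filter.atTop (nhds c)) :
    MeasureTheory.IntegrableOn lam (Set.Ioi s₀) ∧
    (∃ c'' > (0:ℝ), Filter.Tendsto
      (fun s : ℝ => (Ttot s₀ lam - tOf s₀ lam s) ^ (ℓ - 1)
        / (s⁻¹ * Real.log s ^ ((ℓ : ℝ) / ((ℓ : ℝ) - 1))))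
      Filter.atTop (nhds c'')) ∧
    (∃ c' > (0:ℝ), Filter.Tendsto
      (fun s : ℝ => lam s
        / ((Ttot s₀ lam - tOf s₀ lam s) ^ ℓ
          / |Real.log (Ttot s₀ lam - tOf s₀ lam s)| ^ ((ℓ : ℝ) / ((ℓ : ℝ) - 1))))
      Filter.atTop (nhds c')) :=
  blowup_rate_conversion_general ℓ hℓ s₀ lam hcont c hc hasymp
end
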